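/- arXiv:2512.23352 — 9 statements merged into one kernel-verified Lean document; each statement's English description precedes it below -/
import Mathlib

section
/- The 'envy graph' of a Pareto efficient allocation is acyclic, where the envy graph has objects as vertices and a directed edge from h to h' whenever some agent currently holding h strictly prefers h' to h and some agent currently holds h'. -/
/-!
An envy cycle of objects lifts to a cycle of agents, each envying the object of the next, because
whether agent `i` envies agent `j` depends on `j` only through the object `j` holds. A shortest
such cycle visits every agent at most once, so passing the objects along it is a permutation of
the agents under which every agent on the cycle is strictly better off and every other agent keeps
their object. This contradicts Pareto efficiency.
-/

open Relation

namespace List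

variable {α : Type*} {r : α → α → Prop}

theorem exists_eq_append_cons_append_cons_of_not_nodup {l : List α} (hl : ¬l.Nodup) :
    ∃ x s t u, l = s ++ x :: t ++ x :: u := by
  obtain ⟨x, hx⟩ := exists_duplicate_iff_not_nodup.mpr hl
  obtain ⟨r₁, r₂, rfl, hx₁, hx₂⟩ := cons_sublist_iff.mp (duplicate_iff_sublist.mp hx)
  obtain ⟨s, t, rfl⟩ := append_of_mem hx₁
  obtain ⟨u, v, rfl⟩ := append_of_mem (singleton_sublist.mp hx₂)
  exact ⟨x, s, t ++ u, v, by simp⟩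

theorem exists_nodup_cycle_chain {l : List α} (hl : l ≠ []) (hc : Cycle.Chain r (l : Cycle α)) :
    ∃ l' : List α, l' ≠ [] ∧ l'.Nodup ∧ Cycle.Chain r (l' : Cycle α) := by
  induction h : l.length using Nat.strong_induction_on generalizing l with
  | _ n ih =>
    by_cases hnd : l.Nodup
    · exact ⟨l, hl, hnd, hc⟩
    obtain ⟨x, s, t, u, rfl⟩ := exists_eq_append_cons_append_cons_of_not_nodup hnd
    -- rotating the repeated entry `x` to the front exhibits the shorter cycle `x :: t`
    have hrot : ((s ++ x :: t ++ x :: u : List α) : Cycle α) =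
        (x :: (t ++ x :: (u ++ s)) : List α) :=
      Cycle.coe_eq_coe.mpr <| by
        simpa only [append_assoc, cons_append] using
          isRotated_append (l := s) (l' := x :: (t ++ x :: u))
    rw [hrot, Cycle.chain_coe_cons] at hc
    have hshort : Cycle.Chain r ((x :: t : List α) : Cycle α) :=
      hc.infix (IsPrefix.isInfix ⟨u ++ s ++ [x], by simp⟩)
    exact ih _ (by rw [← h]; simp; omega) (cons_ne_nil x t) hshort rfl

theorem Nodup.rel_next_of_cycle_chain [DecidableEq α] {l : List α} (hl : l.Nodup)
    (hc : Cycle.Chain r (l : Cycle α)) {x : α} (hx : x ∈ l) : r x (l.next x hx) := by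
  obtain ⟨k, hk, rfl⟩ := getElem_of_mem hx
  obtain ⟨a, m, rfl⟩ := exists_cons_of_ne_nil (ne_nil_of_mem hx)
  have hnext : Forall₂ r (a :: m) ((a :: m).pmap (a :: m).next fun _ h => h) := by
    rw [pmap_next_eq_rotate_one _ hl, rotate_cons_succ, rotate_zero]
    exact isChain_cons_append_singleton_iff_forall₂.mp hc
  simpa only [get_eq_getElem, getElem_pmap] using
    (forall₂_iff_get.mp hnext).2 k hk (by simpa using hk)

end List

namespace Relation.TransGen

variable {α β : Type*} {r : α → α → Prop}

theorem exists_cycle_chain {a : α} (h : TransGen r a a) :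
    ∃ l : List α, l ≠ [] ∧ Cycle.Chain r (l : Cycle α) := by
  obtain ⟨b, hab, hba⟩ := head'_iff.mp h
  obtain ⟨l, hl, hlast⟩ := List.exists_isChain_cons_of_relationReflTransGen hba
  refine ⟨a :: (b :: l).dropLast, List.cons_ne_nil _ _, ?_⟩
  have hbl : (b :: l).dropLast ++ [a] = b :: l := hlast ▸ List.dropLast_append_getLast _
  rw [Cycle.chain_coe_cons, hbl]
  exact hl.cons_cons hab

theorem exists_perm_eq_or_rel {a : α} (h : TransGen r a a) :
    ∃ σ : Equiv.Perm α, (∀ i, σ i = i ∨ r i (σ i)) ∧ ∃ i, r i (σ i) := by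
  classical
  obtain ⟨l, hl, hc⟩ := h.exists_cycle_chain
  obtain ⟨l, hl, hnd, hc⟩ := List.exists_nodup_cycle_chain hl hc
  have hrel : ∀ i ∈ l, r i (l.formPerm i) := fun i hi => by
    rw [List.formPerm_apply_mem_eq_next hnd i hi]
    exact hnd.rel_next_of_cycle_chain hc hi
  refine ⟨l.formPerm, fun i => ?_, l.head hl, hrel _ (List.head_mem hl)⟩
  by_cases hi : i ∈ l
  · exact .inr (hrel i hi)
  · exact .inl (List.formPerm_apply_of_notMem hi)

theorem exists_lift_of_map {f : α → β} (hf : ∀ i j j', f j = f j' → r i j → r i j')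
    {b c : β} (h : TransGen (Relation.Map r f f) b c) {j : α} (hj : f j = c) :
    ∃ i, f i = b ∧ TransGen r i j := by
  induction h generalizing j with
  | single hbc =>
    obtain ⟨i, k, hik, hi, hk⟩ := hbc
    exact ⟨i, hi, .single (hf i k j (hk.trans hj.symm) hik)⟩
  | tail _ hcd ih =>
    obtain ⟨i, k, hik, hi, hk⟩ := hcd
    obtain ⟨i₀, hi₀, h₀⟩ := ih hi
    exact ⟨i₀, hi₀, h₀.tail (hf i k j (hk.trans hj.symm) hik)⟩

theorem exists_self_of_map_self {f : α → β} (hf : ∀ i j j', f j = f j' → r i j → r i j')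
    {b : β} (h : TransGen (Relation.Map r f f) b b) : ∃ i, TransGen r i i := by
  obtain ⟨j, hj⟩ : ∃ j, f j = b := by
    obtain ⟨_, _, ⟨_, j, _, _, hj⟩⟩ := tail'_iff.mp h
    exact ⟨j, hj⟩
  obtain ⟨i, hi, hij⟩ := h.exists_lift_of_map hf hj
  obtain ⟨k, hik, hkj⟩ := tail'_iff.mp hij
  exact ⟨i, .tail' hik (hf k j i (hj.trans hi.symm) hkj)⟩

end Relation.TransGen

theorem stmt_2_general {I H : Type*}
    (P : I → H → H → Prop) (x : I → H)
    (hPE : ¬ ∃ σ : Equiv.Perm I,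
      (∀ i : I, x (σ i) = x i ∨ P i (x (σ i)) (x i)) ∧
      (∃ i : I, P i (x (σ i)) (x i))) :
    ∀ h : H, ¬ Relation.TransGen
      (fun h h' : H => ∃ i i' : I, x i = h ∧ x i' = h' ∧ P i h' h) h h := by
  intro h hcyc
  have hmap : TransGen (Relation.Map (fun i j => P i (x j) (x i)) x x) h h :=
    TransGen.mono (by rintro _ _ ⟨i, j, rfl, rfl, hP⟩; exact ⟨i, j, hP, rfl, rfl⟩) _ _ hcyc
  have hcongr : ∀ i j j', x j = x j' → P i (x j) (x i) → P i (x j') (x i) :=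
    fun _ _ _ hjj' => hjj' ▸ id
  obtain ⟨i, hi⟩ := hmap.exists_self_of_map_self hcongr
  obtain ⟨σ, hσ, j, hj⟩ := hi.exists_perm_eq_or_rel
  exact hPE ⟨σ, fun k => (hσ k).imp (congrArg x) id, j, hj⟩

/-- the envy graph of a Pareto efficient allocation is acyclic. -/
theorem stmt_2 {I H : Type*} [Fintype I]
    (P : I → H → H → Prop) (x : I → H)
    (hasymm : ∀ i : I, ∀ a b : H, P i a b → ¬ P i b a)
    (htrans : ∀ i : I, ∀ a b c : H, P i a b → P i b c → P i a c)
    (htotal : ∀ i : I, ∀ a b : H, a ≠ b → P i a b ∨ P i b a)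
    (hPE : ¬ ∃ σ : Equiv.Perm I,
      (∀ i : I, x (σ i) = x i ∨ P i (x (σ i)) (x i)) ∧
      (∃ i : I, P i (x (σ i)) (x i))) :
    ∀ h : H, ¬ Relation.TransGen
      (fun h h' : H => ∃ i i' : I, x i = h ∧ x i' = h' ∧ P i h' h) h h :=
  stmt_2_general P x hPE
end

section
/- If an aggregate allocation x is Pareto efficient and individually rational under some type-homogeneous preference profile P, then the aggregate allocation graph AG of the instance is acyclic. -/
/-!
By individual rationality, an edge `c → c'` of the aggregate allocation graph means that some
agent of a type preferring `c'` to `c` trades `c` away for `c'`; the agent of that type holding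
`c` therefore strictly prefers `c'`. A cycle in the graph contains a simple cycle of objects, and
rotating the objects along it among their holders strictly improves each of them and leaves
everyone else unchanged, contradicting Pareto efficiency.
-/

open Function

namespace Relation

variable {α : Type*} {r : α → α → Prop} {a b : α}

theorem TransGen.exists_finset_transGen_and_mem (h : TransGen r a b) :
    ∃ s : Finset α, TransGen (fun x y => r x y ∧ y ∈ s) a b := by
  classical
  induction h with
  | @single c hac => exact ⟨{c}, .single ⟨hac, Finset.mem_singleton_self c⟩⟩
  | @tail c d _ hcd ih =>
    obtain ⟨s, hs⟩ := ih
    refine ⟨insert d s, TransGen.tail ?_ ⟨hcd, Finset.mem_insert_self d s⟩⟩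
    exact TransGen.mono (fun x y hxy => ⟨hxy.1, Finset.mem_insert_of_mem hxy.2⟩) _ _ hs

theorem exists_rel_iterate_of_transGen_self (h : TransGen r a a) :
    ∃ g : α → α, ∀ n, r (g^[n] a) (g^[n + 1] a) := by
  let scc : Set α := {c | ReflTransGen r a c ∧ TransGen r c a}
  have hstep : ∀ c ∈ scc, ∃ d ∈ scc, r c d := by
    rintro c ⟨hac, hca⟩
    obtain ⟨d, hcd, hda⟩ := TransGen.head'_iff.mp hca
    refine ⟨d, ⟨hac.tail hcd, ?_⟩, hcd⟩
    rcases reflTransGen_iff_eq_or_transGen.mp hda with rfl | hda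
    · exact h
    · exact hda
  choose! g hg_mem hg_rel using hstep
  have hiter : ∀ n, g^[n] a ∈ scc := fun n => by
    induction n with
    | zero => exact ⟨.refl, h⟩
    | succ n ih => rw [iterate_succ_apply']; exact hg_mem _ ih
  exact ⟨g, fun n => by rw [iterate_succ_apply']; exact hg_rel _ (hiter n)⟩

theorem exists_injective_cycle_of_transGen_self (h : TransGen r a a) :
    ∃ (n : ℕ) (c : Fin (n + 1) → α), Injective c ∧ ∀ p, r (c p) (c (p + 1)) := by
  obtain ⟨s, hs⟩ := h.exists_finset_transGen_and_mem
  obtain ⟨g, hg⟩ := exists_rel_iterate_of_transGen_self hs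
  -- All iterates after the first lie in the finite set `s`, so the orbit of `a` is eventually periodic.
  obtain ⟨m, m', hlt, heq⟩ := s.finite_toSet.exists_lt_map_eq_of_forall_mem
    (f := fun n => g^[n + 1] a) fun n => (hg n).2
  set b := g^[m + 1] a
  have hb : b ∈ periodicPts g := by
    refine mk_mem_periodicPts (n := m' - m) (by omega) ?_
    change g^[m' - m] (g^[m + 1] a) = _
    rw [← iterate_add_apply, heq]
    congr 1
    omega
  have hrb : ∀ j, r (g^[j] b) (g^[j + 1] b) := fun j => by
    simpa only [b, ← iterate_add_apply, Nat.add_right_comm] using (hg (j + (m + 1))).1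
  obtain ⟨n, hn⟩ := Nat.exists_eq_succ_of_ne_zero (minimalPeriod_pos_of_mem_periodicPts hb).ne'
  refine ⟨n, fun p => g^[p] b, fun p q hpq => Fin.ext ?_, fun p => ?_⟩
  · exact iterate_injOn_Iio_minimalPeriod (by simp [hn, p.isLt]) (by simp [hn, q.isLt]) hpq
  · have hsucc : ((p + 1 : Fin (n + 1)) : ℕ) = (p + 1) % minimalPeriod g b := by
      rw [Fin.val_add, Fin.val_one', Nat.add_mod_mod, hn]
    simpa only [hsucc, iterate_mod_minimalPeriod_eq] using hrb p

end Relation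

theorem Equiv.Perm.exists_apply_eq_add_one_of_injective {ι : Type*} {n : ℕ} {a : Fin (n + 1) → ι}
    (ha : Injective a) :
    ∃ σ : Equiv.Perm ι, (∀ p, σ (a p) = a (p + 1)) ∧ ∀ i ∉ Set.range a, σ i = i := by
  classical
  refine ⟨(finRotate (n + 1)).viaFintypeEmbedding ⟨a, ha⟩, fun p => ?_, fun i hi => ?_⟩
  · simpa [finRotate_apply] using (finRotate (n + 1)).viaFintypeEmbedding_apply_image ⟨a, ha⟩ p
  · exact (finRotate (n + 1)).viaFintypeEmbedding_apply_notMem_range ⟨a, ha⟩ hi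

theorem stmt_7_general {I H T : Type*}
    (P : T → H → H → Prop) (τ : I → T) (x ω : I → H)
    (IR : ∀ i : I, x i = ω i ∨ P (τ i) (x i) (ω i))
    (PE : ¬ ∃ σ : Equiv.Perm I,
      (∀ i : I, x (σ i) = x i ∨ P (τ i) (x (σ i)) (x i)) ∧
      (∃ i : I, P (τ i) (x (σ i)) (x i))) :
    ∀ h : H, ¬ Relation.TransGen
      (fun h h' : H => ∃ i j : I, τ i = τ j ∧ ω j = h ∧ x j = h' ∧ h' ≠ h ∧ x i = h)
      h h := by
  intro h hcyc
  have hedge : ∀ c c', (∃ i j : I, τ i = τ j ∧ ω j = c ∧ x j = c' ∧ c' ≠ c ∧ x i = c) →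
      ∃ i, x i = c ∧ P (τ i) c' c := by
    rintro c c' ⟨i, j, hτ, rfl, rfl, hne, hxi⟩
    exact ⟨i, hxi, hτ ▸ (IR j).resolve_left hne⟩
  obtain ⟨n, c, hc, hcP⟩ :=
    Relation.exists_injective_cycle_of_transGen_self (Relation.TransGen.mono hedge _ _ hcyc)
  choose a hxa hPa using hcP
  have ha : Injective a := Injective.of_comp (f := x) (by rwa [show x ∘ a = c from funext hxa])
  obtain ⟨σ, hσa, hσ⟩ := Equiv.Perm.exists_apply_eq_add_one_of_injective ha
  refine PE ⟨σ, fun i => ?_, a 0, ?_⟩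
  · by_cases hi : i ∈ Set.range a
    · obtain ⟨p, rfl⟩ := hi
      exact .inr (by rw [hσa, hxa, hxa]; exact hPa p)
    · exact .inl (by rw [hσ i hi])
  · rw [hσa, hxa, hxa]
    exact hPa 0

/-- if `x` is Pareto efficient and individually rational under a
type-homogeneous strict linear preference profile, then the aggregate
allocation graph is acyclic. -/
theorem stmt_7 {I H T : Type*} [Fintype I] [Fintype H]
    (P : T → H → H → Prop) (τ : I → T) (x ω : I → H)
    (hasymm : ∀ t : T, ∀ a b : H, P t a b → ¬ P t b a)
    (htrans : ∀ t : T, ∀ a b c : H, P t a b → P t b c → P t a c)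
    (htotal : ∀ t : T, ∀ a b : H, a ≠ b → P t a b ∨ P t b a)
    (IR : ∀ i : I, x i = ω i ∨ P (τ i) (x i) (ω i))
    (PE : ¬ ∃ σ : Equiv.Perm I,
      (∀ i : I, x (σ i) = x i ∨ P (τ i) (x (σ i)) (x i)) ∧
      (∃ i : I, P (τ i) (x (σ i)) (x i))) :
    ∀ h : H, ¬ Relation.TransGen
      (fun h h' : H => ∃ i j : I, τ i = τ j ∧ ω j = h ∧ x j = h' ∧ h' ≠ h ∧ x i = h)
      h h :=
  stmt_7_general P τ x ω IR PE
end

section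
/- If the aggregate allocation graph AG of an aggregate allocation instance is acyclic, then there exists a type-homogeneous strict preference profile under which the allocation x is both Pareto efficient and individually rational. -/
/-!
Since the aggregate allocation graph is acyclic, its objects admit an injective rank `ρ` into
`ℕ` that increases along every edge. An agent of type `t` ranks the objects held by type-`t`
agents above all others, and within each of these two classes prefers higher `ρ`. If `i`
trades `ω i` for `x i ≠ ω i` and `ω i` is held by some type-`τ i` agent, then `(ω i, x i)` is
an edge, so `x i` is preferred; otherwise `ω i` lies in the lower class. A Pareto improvement by a
permutation `σ` could only move each agent to an object of weakly higher rank, strictly for one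
agent, which is impossible since `∑ i, ρ (x (σ i)) = ∑ i, ρ (x i)`.
-/

open Relation Function

theorem exists_injective_nat_of_acyclic {α : Type*} [Fintype α] (r : α → α → Prop)
    (hr : ∀ a, ¬ TransGen r a a) :
    ∃ ρ : α → ℕ, Injective ρ ∧ ∀ a b, r a b → ρ a < ρ b := by
  let _ : IsStrictOrder α (TransGen r) := { irrefl := hr, trans := fun _ _ _ => TransGen.trans }
  let _ : PartialOrder α := partialOrderOfSO (TransGen r)
  let _ : Fintype (LinearExtension α) := ‹Fintype α›
  let e := (Fintype.orderIsoFinOfCardEq (LinearExtension α) rfl).symm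
  refine ⟨fun a => e (toLinearExtension a), fun a b h => e.injective (Fin.val_injective h), ?_⟩
  intro a b hab
  have hlt : toLinearExtension a < toLinearExtension b :=
    (toLinearExtension.monotone (show a < b from .single hab).le).lt_of_ne fun h => by
      obtain rfl : a = b := h
      exact hr a (.single hab)
  exact e.strictMono hlt

theorem not_lt_comp_perm_of_le {ι M : Type*} [Fintype ι] [AddCommMonoid M] [PartialOrder M]
    [IsOrderedCancelAddMonoid M] (f : ι → M) (σ : Equiv.Perm ι) (hle : ∀ i, f i ≤ f (σ i))
    (i : ι) : ¬ f i < f (σ i) := fun hlt =>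
  (Finset.sum_lt_sum (fun j _ => hle j) ⟨i, Finset.mem_univ i, hlt⟩).ne
    (Equiv.sum_comp σ f).symm

section LexRank

variable {α β : Type*} (S : α → Prop) [DecidablePred S] (ρ : α → β)

def lexRank (a : α) : Bool ×ₗ β := toLex (decide (S a), ρ a)

variable {S ρ}

theorem lexRank_injective (hρ : Injective ρ) : Injective (lexRank S ρ) :=
  fun _ _ h => hρ (congrArg Prod.snd (toLex.injective h))

variable [Preorder β]

theorem lexRank_lt_of_neg_of_pos {a b : α} (ha : ¬ S a) (hb : S b) :
    lexRank S ρ a < lexRank S ρ b :=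
  Prod.Lex.toLex_lt_toLex.2 (Or.inl (by simp [ha, hb]))

theorem lexRank_lt_iff_of_pos {a b : α} (ha : S a) :
    lexRank S ρ a < lexRank S ρ b ↔ S b ∧ ρ a < ρ b := by
  by_cases hb : S b <;> simp [lexRank, Prod.Lex.toLex_lt_toLex, ha, hb]

end LexRank

/-- if the aggregate allocation graph is acyclic, there is a
type-homogeneous strict linear preference profile making `x` Pareto efficient
and individually rational. -/
theorem stmt_8 {I H T : Type*} [Fintype I] [Fintype H]
    (τ : I → T) (x ω : I → H)
    (hAG : ∀ h : H, ¬ Relation.TransGen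
      (fun h h' : H => ∃ i j : I, τ i = τ j ∧ ω j = h ∧ x j = h' ∧ h' ≠ h ∧ x i = h)
      h h) :
    ∃ P : T → H → H → Prop,
      (∀ t : T, ∀ a b : H, P t a b → ¬ P t b a) ∧
      (∀ t : T, ∀ a b c : H, P t a b → P t b c → P t a c) ∧
      (∀ t : T, ∀ a b : H, a ≠ b → P t a b ∨ P t b a) ∧
      (∀ i : I, x i = ω i ∨ P (τ i) (x i) (ω i)) ∧
      (¬ ∃ σ : Equiv.Perm I,
        (∀ i : I, x (σ i) = x i ∨ P (τ i) (x (σ i)) (x i)) ∧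
        (∃ i : I, P (τ i) (x (σ i)) (x i))) := by
  classical
  obtain ⟨ρ, hρ, hρ_edge⟩ := exists_injective_nat_of_acyclic _ hAG
  let S : T → H → Prop := fun t h => ∃ i, τ i = t ∧ x i = h
  have hS : ∀ i, S (τ i) (x i) := fun i => ⟨i, rfl, rfl⟩
  let key t := lexRank (S t) ρ
  refine ⟨fun t a b => key t b < key t a, fun _ _ _ => lt_asymm,
    fun _ _ _ _ hab hbc => hbc.trans hab,
    fun _ _ _ hne => (lt_or_gt_of_ne ((lexRank_injective hρ).ne hne)).symm, fun i => ?_, ?_⟩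
  · by_cases hxω : x i = ω i
    · exact .inl hxω
    by_cases hω : S (τ i) (ω i)
    · obtain ⟨k, hk, hxk⟩ := hω
      exact .inr ((lexRank_lt_iff_of_pos ⟨k, hk, hxk⟩).2
        ⟨hS i, hρ_edge _ _ ⟨k, i, hk, rfl, rfl, hxω, hxk⟩⟩)
    · exact .inr (lexRank_lt_of_neg_of_pos hω (hS i))
  · rintro ⟨σ, hweak, i, hi⟩
    have hgain : ∀ j, key (τ j) (x j) < key (τ j) (x (σ j)) → ρ (x j) < ρ (x (σ j)) :=
      fun j h => ((lexRank_lt_iff_of_pos (hS j)).1 h).2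
    refine not_lt_comp_perm_of_le (ρ ∘ x) σ (fun j => ?_) i (hgain i hi)
    rcases hweak j with h | h
    · exact (congrArg ρ h).ge
    · exact (hgain j h).le
end

section
/- An aggregate allocation x is PI-rationalizable (i.e., there exists a type-homogeneous strict preference profile making x Pareto efficient and individually rational) if and only if the aggregate allocation graph AG is acyclic. -/
/-!
If every agent is weakly better off than at her endowment, an edge `h → h'` of the aggregate
graph says that some agent holding `h` has a type that strictly prefers `h'` to `h`. The
objects lying on cycles of the graph can therefore be permuted along edges, and handing each
object to the next one along this permutation is a Pareto improvement.

Conversely, extend an acyclic graph to a linear order `≤` on objects and let every type rank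
first the objects held by agents of that type, each block ordered by `≤`. Trading away from the
endowment always follows an edge, so the allocation is individually rational; a Pareto
improvement could not move an agent out of the first block of her type, so it would be a
permutation that weakly increases every object in `≤`, hence one that moves no object.
-/

open Function Relation

theorem Function.periodicPts_nonempty {α : Type*} [Finite α] [Nonempty α] (f : α → α) :
    (periodicPts f).Nonempty := by
  obtain ⟨a⟩ := ‹Nonempty α›
  obtain ⟨m, n, hne, heq⟩ := Finite.exists_ne_map_eq_of_infinite (f^[·] a)
  wlog hmn : m < n generalizing m n
  · exact this n m hne.symm heq.symm (hne.lt_or_gt.resolve_left hmn)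
  refine ⟨f^[m] a, mk_mem_periodicPts (Nat.sub_pos_of_lt hmn) ?_⟩
  change f^[n - m] (f^[m] a) = f^[m] a
  rw [← iterate_add_apply, Nat.sub_add_cancel hmn.le]
  exact heq.symm

theorem exists_perm_of_forall_exists_rel {α : Type*} [Finite α] [Nonempty α]
    {r : α → α → Prop} (h : ∀ a, ∃ b, r a b) :
    ∃ s : Set α, s.Nonempty ∧ ∃ σ : Equiv.Perm s, ∀ a : s, r a (σ a) := by
  choose f hf using h
  exact ⟨_, periodicPts_nonempty f, (bijOn_periodicPts f).equiv f, fun a => hf a⟩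

theorem Equiv.Perm.apply_eq_of_forall_le {ι α : Type*} [Finite ι] [PartialOrder α]
    (σ : Equiv.Perm ι) {g : ι → α} (h : ∀ i, g i ≤ g (σ i)) (i : ι) :
    g (σ i) = g i := by
  have h_pow : ∀ n j, g j ≤ g ((σ ^ n) j) := by
    intro n
    induction n with
    | zero => exact fun j => le_rfl
    | succ n ih =>
      exact fun j => (ih j).trans (by rw [pow_succ', Equiv.Perm.mul_apply]; exact h _)
  have h_return : (σ ^ (orderOf σ - 1)) (σ i) = i := by
    rw [← Equiv.Perm.mul_apply, ← pow_succ, Nat.sub_add_cancel (orderOf_pos σ),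
      pow_orderOf_eq_one, Equiv.Perm.one_apply]
  refine le_antisymm ?_ (h i)
  calc g (σ i) ≤ g ((σ ^ (orderOf σ - 1)) (σ i)) := h_pow _ _
    _ = g i := by rw [h_return]

theorem Relation.exists_linearOrder_of_acyclic {α : Type*} {r : α → α → Prop}
    (hr : ∀ a, ¬ TransGen r a a) : ∃ _ : LinearOrder α, ∀ a b, r a b → a < b := by
  let _ : PartialOrder α :=
    { le := ReflTransGen r
      le_refl := fun _ => ReflTransGen.refl
      le_trans := fun _ _ _ => ReflTransGen.trans
      le_antisymm := fun a b hab hba => by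
        rcases reflTransGen_iff_eq_or_transGen.mp hab with rfl | hab
        · rfl
        · exact absurd (hab.trans_left hba) (hr a) }
  have hmono : StrictMono (toLinearExtension : α →o LinearExtension α) :=
    toLinearExtension.monotone.strictMono_of_injective fun _ _ => id
  refine ⟨(inferInstance : LinearOrder (LinearExtension α)), fun a b hab => hmono ?_⟩
  exact lt_of_le_of_ne (ReflTransGen.single hab) (by rintro rfl; exact hr a (.single hab))

section Allocation

variable {I H T : Type*} (τ : I → T) (x ω : I → H)

def aggregateGraph (h h' : H) : Prop :=
  ∃ i j : I, τ i = τ j ∧ ω j = h ∧ x j = h' ∧ h' ≠ h ∧ x i = h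

def IsParetoImprovement (P : T → H → H → Prop) (σ : Equiv.Perm I) : Prop :=
  (∀ i, x (σ i) = x i ∨ P (τ i) (x (σ i)) (x i)) ∧ ∃ i, P (τ i) (x (σ i)) (x i)

/-- Type `t` ranks the objects held by its own agents above all others (`False < True` in
`Prop`), and each of the two blocks by `≤`. -/
def heldFirstPref [LinearOrder H] (t : T) (a b : H) : Prop :=
  toLex ((∃ i, τ i = t ∧ x i = b), b) < toLex ((∃ i, τ i = t ∧ x i = a), a)

variable {τ x ω}

theorem exists_pref_of_aggregateGraph {P : T → H → H → Prop}
    (hIR : ∀ i, x i = ω i ∨ P (τ i) (x i) (ω i)) {h h' : H}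
    (hedge : aggregateGraph τ x ω h h') :
    ∃ i, x i = h ∧ P (τ i) h' h := by
  obtain ⟨i, j, hij, rfl, rfl, hne, hi⟩ := hedge
  exact ⟨i, hi, hij ▸ (hIR j).resolve_left hne⟩

theorem exists_isParetoImprovement_of_perm {P : T → H → H → Prop} {β : Type*} [Nonempty β]
    (σ₀ : Equiv.Perm β) {e : β → H} (he : Injective e)
    (himp : ∀ b, ∃ i, x i = e b ∧ P (τ i) (e (σ₀ b)) (e b)) :
    ∃ σ, IsParetoImprovement τ x P σ := by
  choose a hax hapref using himp
  have ha : Injective a := fun b b' hbb' => he (by rw [← hax, ← hax, hbb'])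
  set σ := σ₀.viaEmbedding ⟨a, ha⟩
  have hσ : ∀ b, σ (a b) = a (σ₀ b) := σ₀.viaEmbedding_apply ⟨a, ha⟩
  have himproves : ∀ b, P (τ (a b)) (x (σ (a b))) (x (a b)) := fun b => by
    rw [hσ, hax, hax]; exact hapref b
  refine ⟨σ, fun i => ?_, a (Classical.arbitrary β), himproves _⟩
  by_cases hi : i ∈ Set.range a
  · obtain ⟨b, rfl⟩ := hi
    exact Or.inr (himproves b)
  · exact Or.inl (congrArg x (σ₀.viaEmbedding_apply_of_notMem ⟨a, ha⟩ i hi))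

theorem exists_isParetoImprovement_of_transGen [Finite I] {P : T → H → H → Prop}
    (hIR : ∀ i, x i = ω i ∨ P (τ i) (x i) (ω i)) {h : H}
    (hcyc : TransGen (aggregateGraph τ x ω) h h) : ∃ σ, IsParetoImprovement τ x P σ := by
  set S := {h | TransGen (aggregateGraph τ x ω) h h}
  have hS : S ⊆ Set.range x := fun h hh => by
    obtain ⟨_, ⟨i, -, -, -, -, -, hi⟩, -⟩ := TransGen.head'_iff.mp hh
    exact ⟨i, hi⟩
  have : Finite S := ((Set.finite_range x).subset hS).to_subtype
  have : Nonempty S := ⟨⟨h, hcyc⟩⟩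
  have hnext : ∀ b : S, ∃ c : S, aggregateGraph τ x ω b c := fun ⟨b, hb⟩ => by
    obtain ⟨c, hbc, hcb⟩ := TransGen.head'_iff.mp hb
    exact ⟨⟨c, TransGen.tail' hcb hbc⟩, hbc⟩
  obtain ⟨s, hs, σ₀, hσ₀⟩ := exists_perm_of_forall_exists_rel hnext
  have := hs.to_subtype
  exact exists_isParetoImprovement_of_perm σ₀
    (Subtype.val_injective.comp Subtype.val_injective)
    fun b => exists_pref_of_aggregateGraph hIR (hσ₀ b)

section HeldFirst

variable [LinearOrder H]

theorem eq_or_heldFirstPref_endowment (hG : ∀ h h', aggregateGraph τ x ω h h' → h < h')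
    (i : I) : x i = ω i ∨ heldFirstPref τ x (τ i) (x i) (ω i) := by
  by_cases hne : x i = ω i
  · exact Or.inl hne
  have hx : ∃ i', τ i' = τ i ∧ x i' = x i := ⟨i, rfl, rfl⟩
  refine Or.inr (Prod.Lex.toLex_lt_toLex.mpr ?_)
  by_cases hω : ∃ i', τ i' = τ i ∧ x i' = ω i
  · obtain ⟨i', hτ, hx'⟩ := hω
    exact Or.inr ⟨propext (iff_of_true ⟨i', hτ, hx'⟩ hx),
      hG _ _ ⟨i', i, hτ, rfl, rfl, hne, hx'⟩⟩
  · exact Or.inl (not_le.mp fun h => hω (h hx))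

theorem le_of_eq_or_heldFirstPref {i : I} {b : H}
    (hb : b = x i ∨ heldFirstPref τ x (τ i) b (x i)) : x i ≤ b := by
  rcases hb with rfl | hb
  · exact le_rfl
  rcases Prod.Lex.toLex_lt_toLex.mp hb with hheld | ⟨-, hlt⟩
  · exact absurd hheld (not_lt.mpr fun _ => ⟨i, rfl, rfl⟩)
  · exact hlt.le

theorem not_isParetoImprovement_heldFirstPref [Finite I] (σ : Equiv.Perm I) :
    ¬ IsParetoImprovement τ x (heldFirstPref τ x) σ := by
  rintro ⟨hweak, i, hi⟩
  rw [σ.apply_eq_of_forall_le (g := x) (fun i => le_of_eq_or_heldFirstPref (hweak i)) i] at hi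
  exact lt_irrefl _ hi

end HeldFirst

end Allocation

theorem stmt_9_general {I H T : Type*} [Fintype I]
    (τ : I → T) (x ω : I → H) :
    (∃ P : T → H → H → Prop,
      (∀ t : T, ∀ a b : H, P t a b → ¬ P t b a) ∧
      (∀ t : T, ∀ a b c : H, P t a b → P t b c → P t a c) ∧
      (∀ t : T, ∀ a b : H, a ≠ b → P t a b ∨ P t b a) ∧
      (∀ i : I, x i = ω i ∨ P (τ i) (x i) (ω i)) ∧
      (¬ ∃ σ : Equiv.Perm I,
        (∀ i : I, x (σ i) = x i ∨ P (τ i) (x (σ i)) (x i)) ∧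
        (∃ i : I, P (τ i) (x (σ i)) (x i)))) ↔
    (∀ h : H, ¬ Relation.TransGen
      (fun h h' : H => ∃ i j : I, τ i = τ j ∧ ω j = h ∧ x j = h' ∧ h' ≠ h ∧ x i = h)
      h h) := by
  constructor
  · rintro ⟨P, -, -, -, hIR, hPE⟩ h hcyc
    exact hPE (exists_isParetoImprovement_of_transGen hIR hcyc)
  · intro hacyc
    obtain ⟨_, hG⟩ := exists_linearOrder_of_acyclic (r := aggregateGraph τ x ω) hacyc
    refine ⟨heldFirstPref τ x, fun _ _ _ => lt_asymm, fun _ _ _ _ hab hbc => hbc.trans hab,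
      fun _ a b hne => lt_or_gt_of_ne fun hkey => hne ?_, eq_or_heldFirstPref_endowment hG,
      fun ⟨σ, hσ⟩ => not_isParetoImprovement_heldFirstPref σ hσ⟩
    exact (congrArg (fun p => (ofLex p).2) hkey).symm

/-- an aggregate allocation is PI-rationalizable if and only if
its aggregate allocation graph is acyclic. -/
theorem stmt_9 {I H T : Type*} [Fintype I] [Fintype H]
    (τ : I → T) (x ω : I → H) :
    (∃ P : T → H → H → Prop,
      (∀ t : T, ∀ a b : H, P t a b → ¬ P t b a) ∧
      (∀ t : T, ∀ a b c : H, P t a b → P t b c → P t a c) ∧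
      (∀ t : T, ∀ a b : H, a ≠ b → P t a b ∨ P t b a) ∧
      (∀ i : I, x i = ω i ∨ P (τ i) (x i) (ω i)) ∧
      (¬ ∃ σ : Equiv.Perm I,
        (∀ i : I, x (σ i) = x i ∨ P (τ i) (x (σ i)) (x i)) ∧
        (∃ i : I, P (τ i) (x (σ i)) (x i)))) ↔
    (∀ h : H, ¬ Relation.TransGen
      (fun h h' : H => ∃ i j : I, τ i = τ j ∧ ω j = h ∧ x j = h' ∧ h' ≠ h ∧ x i = h)
      h h) :=
  stmt_9_general τ x ω
end

section
/- There exists an aggregate allocation instance (5 agents, 3 types, 5 objects) that is PI-rationalizable but not rationalizable as strict-core stable: some type-homogeneous preference profile makes the allocation Pareto efficient and individually rational, yet no type-homogeneous profile makes it strict-core stable. -/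
def Blocks {I H : Type*} (P : I → H → H → Prop) (ω x : I → H)
    (S : Finset I) : Prop :=
  S.Nonempty ∧ ∃ σ : Equiv.Perm I,
    (∀ i ∉ S, σ i = i) ∧ (∀ i ∈ S, σ i ∈ S) ∧
    (∀ i ∈ S, ω (σ i) = x i ∨ P i (ω (σ i)) (x i)) ∧
    (∃ i ∈ S, P i (ω (σ i)) (x i))

def SLO {H : Type*} (R : H → H → Prop) : Prop :=
  (∀ a b, R a b → ¬ R b a) ∧ (∀ a b c, R a b → R b c → R a c) ∧
  (∀ a b, a ≠ b → R a b ∨ R b a)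

/-!
Under the profile `piProfile`, where type `t1` ranks `h2` first, every agent except `i5` receives
its favourite object, so any Pareto improvement fixes their objects and, by counting, the object
of `i5` as well. Conversely, take any type-homogeneous profile. If type `t1` prefers `h1` to `h2`,
agent `i1` blocks alone by keeping its endowment `h1`; otherwise `i2`, `i4`, `i5` trade along the
cycle `i2 → i4 → i5 → i2`, which gives `i2` and `i4` their objects and `i5` the preferred `h2`.
-/

theorem SLO.of_injective {H β : Type*} [LinearOrder β] {f : H → β} (hf : Function.Injective f) :
    SLO (fun a b => f a < f b) :=
  ⟨fun _ _ h => h.not_gt, fun _ _ _ => lt_trans,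
    fun _ _ h => (hf.ne h).lt_or_gt⟩

theorem Equiv.Perm.apply_comp_eq_of_forall_ne {ι G : Type*} [Fintype ι] [DecidableEq ι]
    [AddCommGroup G] (σ : Equiv.Perm ι) (f : ι → G) (j : ι) (h : ∀ i ≠ j, f (σ i) = f i) :
    f (σ j) = f j := by
  have hsum := Equiv.sum_comp σ f
  rw [← Finset.add_sum_erase _ _ (Finset.mem_univ j),
    ← Finset.add_sum_erase _ f (Finset.mem_univ j),
    Finset.sum_congr rfl fun i hi => h i (Finset.ne_of_mem_erase hi)] at hsum
  exact add_right_cancel hsum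

theorem not_exists_paretoImprovement_of_top {ι H : Type*} [Fintype ι] [DecidableEq ι]
    [AddCommGroup H] (R : ι → H → H → Prop) (hirr : ∀ i a, ¬ R i a a) (x : ι → H) (j : ι)
    (htop : ∀ i ≠ j, ∀ h, ¬ R i h (x i)) :
    ¬ ∃ σ : Equiv.Perm ι,
      (∀ i, x (σ i) = x i ∨ R i (x (σ i)) (x i)) ∧ (∃ i, R i (x (σ i)) (x i)) := by
  rintro ⟨σ, hweak, i, hstrict⟩
  have hothers : ∀ i ≠ j, x (σ i) = x i := fun i hi =>
    (hweak i).resolve_right (htop i hi _)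
  have hfixed : ∀ i, x (σ i) = x i := fun i => by
    by_cases hi : i = j
    · exact hi ▸ σ.apply_comp_eq_of_forall_ne x j hothers
    · exact hothers i hi
  exact hirr i _ (hfixed i ▸ hstrict)

theorem blocks_singleton {I H : Type*} {P : I → H → H → Prop} {ω x : I → H} {i : I}
    (h : P i (ω i) (x i)) : Blocks P ω x {i} :=
  ⟨Finset.singleton_nonempty i, Equiv.refl I, fun _ _ => rfl,
    fun _ hk => hk, fun _ hk => Finset.mem_singleton.1 hk ▸ Or.inr h,
    ⟨i, Finset.mem_singleton_self i, h⟩⟩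

theorem blocks_cycle {I H : Type*} [DecidableEq I] {P : I → H → H → Prop} {ω x : I → H}
    {a b c : I} (hab : a ≠ b) (hbc : b ≠ c) (hac : a ≠ c)
    (ha : ω b = x a ∨ P a (ω b) (x a)) (hb : ω c = x b ∨ P b (ω c) (x b))
    (hc : P c (ω a) (x c)) : Blocks P ω x {a, b, c} := by
  set σ : Equiv.Perm I := Equiv.swap a b * Equiv.swap b c
  have hσa : σ a = b := by
    simp [σ, Equiv.swap_apply_of_ne_of_ne hab hac]
  have hσb : σ b = c := by
    simp [σ, Equiv.swap_apply_of_ne_of_ne hac.symm hbc.symm]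
  have hσc : σ c = a := by simp [σ]
  refine ⟨Finset.insert_nonempty _ _, σ, ?_, ?_, ?_, c, by simp, hσc ▸ hc⟩
  · intro i hi
    simp only [Finset.mem_insert, Finset.mem_singleton, not_or] at hi
    simp [σ, Equiv.swap_apply_of_ne_of_ne hi.2.1 hi.2.2,
      Equiv.swap_apply_of_ne_of_ne hi.1 hi.2.1]
  · intro i hi
    simp only [Finset.mem_insert, Finset.mem_singleton] at hi
    rcases hi with rfl | rfl | rfl <;> simp [hσa, hσb, hσc]
  · intro i hi
    simp only [Finset.mem_insert, Finset.mem_singleton] at hi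
    rcases hi with rfl | rfl | rfl
    · exact hσa ▸ ha
    · exact hσb ▸ hb
    · exact hσc ▸ Or.inr hc

def piRank : Fin 3 → Fin 5 → ℕ := ![![1, 0, 2, 3, 4], ![2, 1, 0, 3, 4], ![0, 1, 2, 3, 4]]

def piProfile (t : Fin 3) (a b : Fin 5) : Prop := piRank t a < piRank t b

theorem piProfile_slo (t : Fin 3) : SLO (piProfile t) :=
  SLO.of_injective (f := piRank t) (by revert t; unfold piRank; decide)

/-- the five-agent instance (objects h1..h5 encoded as 0..4,
types t1,t2,t3 as 0,1,2) is PI-rationalizable but not rationalizable as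
strict-core stable. -/
theorem stmt_11 :
    let τ : Fin 5 → Fin 3 := ![0, 1, 0, 2, 0]
    let ω : Fin 5 → Fin 5 := ![0, 1, 1, 2, 0]
    let x : Fin 5 → Fin 5 := ![1, 2, 1, 0, 0]
    (∃ P : Fin 3 → Fin 5 → Fin 5 → Prop,
      (∀ t, SLO (P t)) ∧
      (∀ i, x i = ω i ∨ P (τ i) (x i) (ω i)) ∧
      (¬ ∃ σ : Equiv.Perm (Fin 5),
        (∀ i, x (σ i) = x i ∨ P (τ i) (x (σ i)) (x i)) ∧
        (∃ i, P (τ i) (x (σ i)) (x i)))) ∧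
    (¬ ∃ P : Fin 3 → Fin 5 → Fin 5 → Prop,
      (∀ t, SLO (P t)) ∧
      ¬ ∃ S : Finset (Fin 5), Blocks (fun i => P (τ i)) ω x S) := by
  intro τ ω x
  refine ⟨⟨piProfile, piProfile_slo, ?_, ?_⟩, ?_⟩
  · unfold piProfile piRank; decide
  · refine not_exists_paretoImprovement_of_top (fun i => piProfile (τ i))
      (fun _ _ => lt_irrefl _) x 4 ?_
    unfold piProfile piRank; decide
  · rintro ⟨P, hP, hstable⟩
    apply hstable
    rcases (hP 0).2.2 0 1 (by decide) with h | h
    · exact ⟨{0}, blocks_singleton h⟩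
    · exact ⟨{1, 3, 4}, blocks_cycle (by decide) (by decide) (by decide) (Or.inl rfl)
        (Or.inl rfl) h⟩
end

section
/- Given a finite graph G = (V, E), construct an aggregate allocation instance with, for each vertex v_j, one type t_j and one object h_j, one 'stayer' agent of type t_j with endowment and allocation h_j, and for each edge (v_j, v_k) ∈ E, L = |V|+1 'switcher' agents of type t_j with endowment h_j and allocation h_k (and symmetrically for t_k). Then for any subset Ṽ ⊆ V that is an independent set of G, the object-reduced allocation restricted to agents whose endowment and allocation both lie in {h_j : v_j ∈ Ṽ} has an acyclic aggregate allocation graph. -/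
variable {V : Type*} [Fintype V] [DecidableEq V]

/-- Agents of the instance built from a graph `G`: one stayer per vertex, and
`L = |V| + 1` switchers per oriented edge. -/
def Agent (G : SimpleGraph V) : Type _ :=
  V ⊕ ({p : V × V // G.Adj p.1 p.2} × Fin (Fintype.card V + 1))

/-- Type of an agent: stayer at `v` and switchers leaving `v` have type `v`. -/
def typ (G : SimpleGraph V) : Agent G → V :=
  Sum.elim id (fun s => s.1.val.1)

/-- Endowment: stayer at `v` owns `h_v`; a switcher on edge `(j,k)` owns `h_j`. -/
def endow (G : SimpleGraph V) : Agent G → V :=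
  Sum.elim id (fun s => s.1.val.1)

/-- Allocation: stayer at `v` keeps `h_v`; a switcher on edge `(j,k)` gets `h_k`. -/
def alloc (G : SimpleGraph V) : Agent G → V :=
  Sum.elim id (fun s => s.1.val.2)

/-- Aggregate allocation graph of the object-reduced instance `x(H')`: only
agents whose endowment and allocation both lie in `H'` are kept. -/
def redAG (G : SimpleGraph V) (H' : Set V) (h h' : V) : Prop :=
  ∃ i j : Agent G,
    endow G i ∈ H' ∧ alloc G i ∈ H' ∧ endow G j ∈ H' ∧ alloc G j ∈ H' ∧
    typ G i = typ G j ∧ endow G j = h ∧ alloc G j = h' ∧ h' ≠ h ∧ alloc G i = h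

theorem endow_eq_alloc_of_not_adj {V : Type*} [Fintype V] (G : SimpleGraph V) (j : Agent G)
    (hj : ¬ G.Adj (endow G j) (alloc G j)) : endow G j = alloc G j := by
  cases j with
  | inl _ => rfl
  | inr s => exact absurd s.1.property hj

/-- Only stayers survive the reduction to an independent set, and stayers never move. -/
theorem not_redAG_of_independent {V : Type*} [Fintype V] (G : SimpleGraph V) {Vt : Set V}
    (hind : ∀ a ∈ Vt, ∀ b ∈ Vt, ¬ G.Adj a b) (h h' : V) : ¬ redAG G Vt h h' := by
  rintro ⟨-, j, -, -, hjE, hjA, -, rfl, rfl, hne, -⟩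
  exact hne (endow_eq_alloc_of_not_adj G j (hind _ hjE _ hjA)).symm

/-- if `Vt` is an independent set of `G`, then the aggregate
allocation graph of the instance reduced to the objects of `Vt` is acyclic. -/
theorem stmt_14 (G : SimpleGraph V) (Vt : Set V)
    (hind : ∀ a ∈ Vt, ∀ b ∈ Vt, ¬ G.Adj a b) :
    ∀ h : V, ¬ Relation.TransGen (redAG G Vt) h h := by
  intro h hcyc
  cases hcyc with
  | single hstep => exact not_redAG_of_independent G hind _ _ hstep
  | tail _ hstep => exact not_redAG_of_independent G hind _ _ hstep
end

section
/- In the instance constructed from graph G = (V, E) (one type t_j and object h_j per vertex; one stayer of type t_j at h_j; for each edge (v_j, v_k), L switchers of type t_j from h_j to h_k and L switchers of type t_k from h_k to h_j), if H' ⊆ {h_j : v_j ∈ V} is such that the object-reduced instance has an acyclic aggregate allocation graph, then the vertex set {v_j : h_j ∈ H'} is an independent set of G. -/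
variable {V : Type*} [Fintype V] [DecidableEq V]

/-- if the reduced aggregate allocation graph on objects `H'` is
acyclic, then the corresponding vertex set is an independent set of `G`. -/
theorem stmt_15 (G : SimpleGraph V) (H' : Set V)
    (hacyc : ∀ h : V, ¬ Relation.TransGen (redAG G H') h h) :
    ∀ a ∈ H', ∀ b ∈ H', ¬ G.Adj a b := by
  intro a ha b hb hab
  have hne : a ≠ b := G.ne_of_adj hab
  have step : ∀ x y : V, x ∈ H' → y ∈ H' → G.Adj x y → redAG G H' x y := by
    intro x y hx hy hxy
    refine ⟨Sum.inl x, Sum.inr ⟨⟨(x, y), hxy⟩, 0⟩, hx, hx, hx, hy, rfl, rfl, rfl,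
      (G.ne_of_adj hxy).symm, rfl⟩
  exact hacyc a ((Relation.TransGen.single (step a b ha hb hab)).tail
    (step b a hb ha hab.symm))
end

section
/- Let x be an allocation and ω the endowment. Construct for each type t the preference P*_t that ranks all objects received by type-t agents (the set H^t) above all other objects, orders H^t by a linear extension ≻⁺ of the reversed AG-edge relation, and orders H \ H^t by a linear extension of the relation P_t (where h P_t h' iff some type-t agent has x = h and ω = h'). Then x is individually rational under the profile (P*_t): every agent i satisfies x(i) = ω(i) or x(i) P*_{τ(i)} ω(i). -/
theorem stmt_18_general {I H T : Type*}
    (τ : I → T) (x ω : I → H)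
    (succ : H → H → Prop)
    -- `≻⁺` extends the reversed AG-edge relation
    (hsucc_ext : ∀ h h' : H,
      (∃ i j : I, τ i = τ j ∧ ω j = h ∧ x j = h' ∧ h' ≠ h ∧ x i = h) →
      succ h' h)
    (Pplus : T → H → H → Prop) :
    let Hset : T → Set H := fun t => {h | ∃ i : I, τ i = t ∧ x i = h}
    let Pstar : T → H → H → Prop := fun t h h' =>
      (h ∈ Hset t ∧ h' ∈ Hset t ∧ succ h h') ∨
      (h ∈ Hset t ∧ h' ∉ Hset t) ∨
      (h ∉ Hset t ∧ h' ∉ Hset t ∧ Pplus t h h')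
    ∀ i : I, x i = ω i ∨ Pstar (τ i) (x i) (ω i) := by
  intro Hset Pstar i
  have hx : x i ∈ Hset (τ i) := ⟨i, rfl, rfl⟩
  by_cases hxω : x i = ω i
  · exact Or.inl hxω
  right
  by_cases hω : ω i ∈ Hset (τ i)
  · obtain ⟨j, hj, hjω⟩ := hω
    -- `j` receives `ω i` and has the type of `i`, so `(ω i, x i)` is an AG edge.
    exact Or.inl ⟨hx, ⟨j, hj, hjω⟩, hsucc_ext _ _ ⟨j, i, hj, rfl, rfl, hxω, hjω⟩⟩
  · exact Or.inr (Or.inl ⟨hx, hω⟩)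

/-- the constructed profile `P*` (objects received by type-`t`
agents ranked on top via a linear extension `≻⁺` of the reversed AG-edge
relation, remaining objects ranked by a linear extension of the revealed
relation `P_t`) makes the allocation `x` individually rational. -/
theorem stmt_18 {I H T : Type*} [Fintype I] [Fintype H]
    (τ : I → T) (x ω : I → H)
    (succ : H → H → Prop)
    (hsucc_asymm : ∀ a b : H, succ a b → ¬ succ b a)
    (hsucc_trans : ∀ a b c : H, succ a b → succ b c → succ a c)
    (hsucc_total : ∀ a b : H, a ≠ b → succ a b ∨ succ b a)
    -- `≻⁺` extends the reversed AG-edge relation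
    (hsucc_ext : ∀ h h' : H,
      (∃ i j : I, τ i = τ j ∧ ω j = h ∧ x j = h' ∧ h' ≠ h ∧ x i = h) →
      succ h' h)
    (Pplus : T → H → H → Prop)
    (hP_asymm : ∀ t : T, ∀ a b : H, Pplus t a b → ¬ Pplus t b a)
    (hP_trans : ∀ t : T, ∀ a b c : H, Pplus t a b → Pplus t b c → Pplus t a c)
    (hP_total : ∀ t : T, ∀ a b : H, a ≠ b → Pplus t a b ∨ Pplus t b a)
    -- `P⁺_t` extends the revealed relation `P_t`
    (hP_ext : ∀ t : T, ∀ h h' : H,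
      (∃ i : I, τ i = t ∧ x i = h ∧ ω i = h') → Pplus t h h') :
    let Hset : T → Set H := fun t => {h | ∃ i : I, τ i = t ∧ x i = h}
    let Pstar : T → H → H → Prop := fun t h h' =>
      (h ∈ Hset t ∧ h' ∈ Hset t ∧ succ h h') ∨
      (h ∈ Hset t ∧ h' ∉ Hset t) ∨
      (h ∉ Hset t ∧ h' ∉ Hset t ∧ Pplus t h h')
    ∀ i : I, x i = ω i ∨ Pstar (τ i) (x i) (ω i) :=
  stmt_18_general τ x ω succ hsucc_ext Pplus
end

section
/- Let G = (V, E) be a finite graph and construct the MHR instance with one object h_j and one type t_j per vertex, one stayer agent per vertex (type t_j, endowment and allocation h_j), and L = |V| + 1 switcher agents of type t_j from h_j to h_k for each edge (v_j, v_k) ∈ E. Then G has an independent set of size at least k if and only if there exists H' ⊆ H with |H'| ≥ k such that the object-reduced allocation x(H') has an acyclic aggregate allocation graph. -/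
/-!
Stayers own and receive the same object, so they create no edge of the aggregate allocation
graph, while a switcher on the edge `(a, b)` together with the stayer at `a` creates the edge
`a → b`. Hence the aggregate allocation graph of `x(H')` is `G` restricted to `H'` with both
orientations of every edge: it is acyclic exactly when it has no edge, i.e. when `H'` is
independent in `G`.
-/

variable {V : Type*} [Fintype V] [DecidableEq V]

theorem redAG_iff {V : Type*} [Fintype V] (G : SimpleGraph V) (H' : Set V) (a b : V) :
    redAG G H' a b ↔ a ∈ H' ∧ b ∈ H' ∧ G.Adj a b := by
  constructor
  · rintro ⟨i, j, -, -, hje, hja, -, rfl, rfl, hne, -⟩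
    rcases j with v | ⟨⟨⟨p, q⟩, hpq⟩, m⟩
    · exact absurd rfl hne
    · exact ⟨hje, hja, hpq⟩
  · rintro ⟨ha, hb, hab⟩
    exact ⟨Sum.inl a, Sum.inr ⟨⟨(a, b), hab⟩, 0⟩, ha, ha, ha, hb, rfl, rfl, rfl, hab.ne', rfl⟩

theorem redAG_acyclic_iff {V : Type*} [Fintype V] (G : SimpleGraph V) (H' : Set V) :
    (∀ h : V, ¬ Relation.TransGen (redAG G H') h h) ↔ ∀ a ∈ H', ∀ b ∈ H', ¬ G.Adj a b := by
  constructor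
  · intro hacyc a ha b hb hab
    have hto : redAG G H' a b := (redAG_iff G H' a b).2 ⟨ha, hb, hab⟩
    have hfro : redAG G H' b a := (redAG_iff G H' b a).2 ⟨hb, ha, hab.symm⟩
    exact hacyc a ((Relation.TransGen.single hto).tail hfro)
  · intro hind h hcyc
    obtain ⟨a, b, hab⟩ : ∃ a b, redAG G H' a b := by
      cases hcyc with
      | single hab => exact ⟨_, _, hab⟩
      | tail _ hab => exact ⟨_, _, hab⟩
    obtain ⟨ha, hb, hadj⟩ := (redAG_iff G H' a b).1 hab
    exact hind a ha b hb hadj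

/-- `G` has an independent set of size at least `k` iff there is a
set `H'` of at least `k` objects whose object-reduced allocation has an acyclic
aggregate allocation graph (equivalently, is PI-rationalizable). -/
theorem stmt_19 (G : SimpleGraph V) (k : ℕ) :
    (∃ S : Finset V, k ≤ S.card ∧ ∀ a ∈ S, ∀ b ∈ S, ¬ G.Adj a b) ↔
    (∃ H' : Finset V, k ≤ H'.card ∧
      ∀ h : V, ¬ Relation.TransGen (redAG G (H' : Set V)) h h) := by
  simp only [redAG_acyclic_iff, Finset.mem_coe]
end
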